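/- Let f, g : ℝ → ℝ with g continuously differentiable, f twice continuously differentiable, p a real number with f(p) = 0, f'(p) ≠ 0, and p an isolated zero of f. Assume g(0) = 0 and 0 is an isolated zero of g. Define ρ(x) = (f(x + g(f(x))) − f(x)) / g(f(x)) for x ≠ p near p, and ρ(p) = f'(p). Then ρ is differentiable at p and ρ'(p) = f''(p) + (1/2)·f''(p)·g'(0)·f'(p). -/

import Mathlib

/-!
Near `p` the isolation hypotheses give `g (f x) ≠ 0` for `x ≠ p`, so `ρ x = dslope f x (x + g (f x))`
there. The divided difference `(a, b) ↦ dslope f a b` is Fréchet differentiable at a diagonal point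
`(p, p)` with derivative `(a, b) ↦ f''(p) (a + b) / 2`: apply the mean value theorem to `f` minus
its second-order Taylor polynomial at `p`. The chain rule along `x ↦ (x, x + g (f x))`, whose
derivative at `p` is `(1, 1 + g'(0) f'(p))`, then gives `ρ'(p) = f''(p) (2 + g'(0) f'(p)) / 2`.
-/

open Filter Topology

section DSlope

variable {𝕜 E : Type*} [RCLike 𝕜] [NormedAddCommGroup E] [NormedSpace 𝕜 E]

theorem HasDerivAt.sub_quadratic {f : 𝕜 → E} {f' : E} {t : 𝕜} (hf : HasDerivAt f f' t)
    (p : 𝕜) (v c : E) :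
    HasDerivAt (fun x => f x - (x - p) • v - (2⁻¹ * (x - p) ^ 2) • c)
      (f' - v - (t - p) • c) t := by
  have hlin : HasDerivAt (fun x : 𝕜 => x - p) 1 t := (hasDerivAt_id t).sub_const p
  have hsq : HasDerivAt (fun x : 𝕜 => 2⁻¹ * (x - p) ^ 2) (t - p) t :=
    ((hlin.fun_pow 2).const_mul (2⁻¹ : 𝕜)).congr_deriv (by push_cast; ring)
  simpa using (hf.fun_sub (hlin.smul_const v)).fun_sub (hsq.smul_const c)

theorem hasFDerivAt_dslope_diag {f : 𝕜 → E} {p : 𝕜} {c : E}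
    (hf : ∀ᶠ x in 𝓝 p, DifferentiableAt 𝕜 f x) (hf' : HasDerivAt (deriv f) c p) :
    HasFDerivAt (fun z : 𝕜 × 𝕜 => dslope f z.1 z.2)
      (((2 : 𝕜)⁻¹ • (ContinuousLinearMap.fst 𝕜 𝕜 𝕜 + ContinuousLinearMap.snd 𝕜 𝕜 𝕜)).smulRight c)
      (p, p) := by
  rw [hasFDerivAt_iff_isLittleO]
  refine Asymptotics.IsLittleO.of_bound fun ε hε => ?_
  obtain ⟨δ, hδ, hball⟩ : ∃ δ > 0, ∀ t ∈ Metric.ball p δ, DifferentiableAt 𝕜 f t ∧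
      ‖deriv f t - deriv f p - (t - p) • c‖ ≤ ε * ‖t - p‖ :=
    Metric.eventually_nhds_iff_ball.mp (hf.and ((hasDerivAt_iff_isLittleO.mp hf').def hε))
  filter_upwards [Metric.ball_mem_nhds (p, p) hδ] with ⟨a, b⟩ hz
  set r := ‖(a, b) - (p, p)‖
  have hsub : Metric.closedBall p r ⊆ Metric.ball p δ :=
    Metric.closedBall_subset_ball (by rwa [Metric.mem_ball, dist_eq_norm] at hz)
  have ha : a ∈ Metric.closedBall p r := by
    rw [Metric.mem_closedBall, dist_eq_norm]; exact norm_fst_le ((a, b) - (p, p))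
  have hb : b ∈ Metric.closedBall p r := by
    rw [Metric.mem_closedBall, dist_eq_norm]; exact norm_snd_le ((a, b) - (p, p))
  have hderiv : ∀ t ∈ Metric.closedBall p r,
      ‖deriv f t - deriv f p - (t - p) • c‖ ≤ ε * r := fun t ht =>
    (hball t (hsub ht)).2.trans
      (mul_le_mul_of_nonneg_left (by rwa [← dist_eq_norm]) hε.le)
  simp only [dslope_same, Prod.mk_sub_mk, ContinuousLinearMap.smulRight_apply, smul_apply,
    add_apply, ContinuousLinearMap.coe_fst', ContinuousLinearMap.coe_snd', smul_eq_mul]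
  rcases eq_or_ne b a with rfl | hne
  · rw [dslope_same, ← two_mul, inv_mul_cancel_left₀ two_ne_zero]
    exact hderiv b hb
  set φ := fun x => f x - (x - p) • deriv f p - (2⁻¹ * (x - p) ^ 2) • c
  have hφ : ‖φ b - φ a‖ ≤ ε * r * ‖b - a‖ :=
    (convex_closedBall p r).norm_image_sub_le_of_norm_hasDerivWithin_le
      (fun t ht => ((hball t (hsub ht)).1.hasDerivAt.sub_quadratic
        p (deriv f p) c).hasDerivWithinAt) hderiv ha hb
  have hslope : (b - a) • (dslope f a b - deriv f p - (2⁻¹ * ((a - p) + (b - p))) • c) =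
      φ b - φ a := by
    rw [smul_sub, smul_sub, sub_smul_dslope, smul_smul]
    module
  have hba : 0 < ‖b - a‖ := norm_pos_iff.2 (sub_ne_zero.2 hne)
  rw [← mul_le_mul_iff_of_pos_left hba, ← norm_smul, hslope, mul_comm]
  exact hφ

end DSlope

theorem eventually_nhdsNE_of_abs_sub_lt {P : ℝ → Prop} {p : ℝ}
    (h : ∃ ε > 0, ∀ x : ℝ, 0 < |x - p| → |x - p| < ε → P x) : ∀ᶠ x in 𝓝[≠] p, P x := by
  obtain ⟨ε, hε, hP⟩ := h
  filter_upwards [self_mem_nhdsWithin, nhdsWithin_le_nhds (Metric.ball_mem_nhds p hε)]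
    with x hx hxε
  exact hP x (abs_pos.2 (sub_ne_zero.2 hx)) (by rwa [Metric.mem_ball, Real.dist_eq] at hxε)

theorem gSteffensen_rho_hasDerivAt_general (f g : ℝ → ℝ)
    (hg : ContDiff ℝ 1 g) (hf : ContDiff ℝ 2 f)
    (p : ℝ) (hfp : f p = 0)
    (hfiso : ∃ ε > 0, ∀ x : ℝ, 0 < |x - p| → |x - p| < ε → f x ≠ 0)
    (hg0 : g 0 = 0)
    (hgiso : ∃ ε > 0, ∀ y : ℝ, 0 < |y| → |y| < ε → g y ≠ 0) :
    HasDerivAt (fun x : ℝ =>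
        if x = p then deriv f p else (f (x + g (f x)) - f x) / g (f x))
      (deriv (deriv f) p + (1 / 2) * deriv (deriv f) p * deriv g 0 * deriv f p)
      p := by
  have hf' : HasDerivAt (deriv f) (deriv (deriv f) p) p :=
    ((contDiff_succ_iff_deriv.mp hf).2.2.differentiable one_ne_zero p).hasDerivAt
  have hgf : HasDerivAt (fun x => g (f x)) (deriv g 0 * deriv f p) p := by
    have h := (hg.differentiable one_ne_zero (f p)).hasDerivAt.comp p
      (hf.differentiable two_ne_zero p).hasDerivAt
    rwa [hfp] at h
  have hpath : HasDerivAt (fun x => (x, x + g (f x))) (1, 1 + deriv g 0 * deriv f p) p :=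
    (hasDerivAt_id p).prodMk ((hasDerivAt_id p).add hgf)
  have hD := (hasFDerivAt_dslope_diag (.of_forall (hf.differentiable two_ne_zero))
    hf').comp_hasDerivAt_of_eq p hpath (by simp [hfp, hg0])
  have hgf_ne : ∀ᶠ x in 𝓝[≠] p, g (f x) ≠ 0 := by
    have hf_tendsto : Tendsto f (𝓝[≠] p) (𝓝[≠] 0) :=
      tendsto_nhdsWithin_of_tendsto_nhds_of_eventually_within _
        (hfp ▸ hf.continuous.continuousAt.tendsto.mono_left nhdsWithin_le_nhds)
        (eventually_nhdsNE_of_abs_sub_lt hfiso)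
    exact hf_tendsto.eventually (eventually_nhdsNE_of_abs_sub_lt (by simpa using hgiso))
  have hρ : (fun x => if x = p then deriv f p else (f (x + g (f x)) - f x) / g (f x))
      =ᶠ[𝓝 p] fun x => dslope f x (x + g (f x)) := by
    filter_upwards [eventually_nhdsWithin_iff.mp hgf_ne] with x hx
    split_ifs with hxp
    · simp [hxp, hfp, hg0]
    · rw [dslope_of_ne _ (by simpa using hx hxp), slope_def_field, add_sub_cancel_left]
  refine (hD.congr_of_eventuallyEq hρ).congr_deriv ?_
  simp only [ContinuousLinearMap.smulRight_apply, smul_apply, add_apply,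
    ContinuousLinearMap.coe_fst', ContinuousLinearMap.coe_snd', smul_eq_mul]
  ring

/-- Differentiability at the root of the divided-difference function `ρ`
(extended by `ρ(p) = f'(p)`), with
`ρ'(p) = f''(p) + (1/2) f''(p) g'(0) f'(p)`. -/
theorem gSteffensen_rho_hasDerivAt (f g : ℝ → ℝ)
    (hg : ContDiff ℝ 1 g) (hf : ContDiff ℝ 2 f)
    (p : ℝ) (hfp : f p = 0) (hfp' : deriv f p ≠ 0)
    (hfiso : ∃ ε > 0, ∀ x : ℝ, 0 < |x - p| → |x - p| < ε → f x ≠ 0)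
    (hg0 : g 0 = 0)
    (hgiso : ∃ ε > 0, ∀ y : ℝ, 0 < |y| → |y| < ε → g y ≠ 0) :
    HasDerivAt (fun x : ℝ =>
        if x = p then deriv f p else (f (x + g (f x)) - f x) / g (f x))
      (deriv (deriv f) p + (1 / 2) * deriv (deriv f) p * deriv g 0 * deriv f p)
      p :=
  gSteffensen_rho_hasDerivAt_general f g hg hf p hfp hfiso hg0 hgiso
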